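/- arXiv:1610.03356 — 2 statements merged into one kernel-verified Lean document; each statement's English description precedes it below -/
import Mathlib

section
/- For every integer k ≥ 1 and every polynomial q ∈ R, ((E − 0)∘(E − 1)∘⋯∘(E − (k−1)))(q) = ∑_{α ∈ ℕ^n, |α| = k} (k!/(α_1!⋯α_n!)) · x^α · ∂^α q, where (E − j)(q) denotes E(q) − j·q. -/
open MvPolynomial

namespace Arrangement

variable {n : ℕ}

/-- The Euler operator `E(q) = ∑ᵢ xᵢ · ∂q/∂xᵢ`. -/
noncomputable def eulerOp (q : MvPolynomial (Fin n) ℂ) : MvPolynomial (Fin n) ℂ :=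
  ∑ i, X i * pderiv i q

/-- The iterated partial derivative `∂^α = ∂₁^{α₁} ∘ ⋯ ∘ ∂ₙ^{αₙ}`. -/
noncomputable def pdIter (α : Fin n → ℕ) : Module.End ℂ (MvPolynomial (Fin n) ℂ) :=
  (List.finRange n).foldr
    (fun i f => ((pderiv i : Derivation ℂ _ _).toLinearMap ^ α i) * f) 1

/-- The composition `(E − 0) ∘ (E − 1) ∘ ⋯ ∘ (E − (k−1))`, applied to `q`. -/
noncomputable def eulerDownProd : ℕ → MvPolynomial (Fin n) ℂ → MvPolynomial (Fin n) ℂ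
  | 0, q => q
  | k + 1, q => eulerDownProd k (eulerOp q - (k : MvPolynomial (Fin n) ℂ) * q)

end Arrangement


/-!
Each `∂ᵢ` satisfies `∂ᵢ ∘ E = (E + 1) ∘ ∂ᵢ`, hence `∂^α ∘ E = (E + |α|) ∘ ∂^α`. So for `|α| = k`,
`x^α ∂^α (E − k) q = x^α E (∂^α q) = ∑ᵢ x^(α + eᵢ) ∂^(α + eᵢ) q`, and the claim follows by induction
on `k` from Pascal's recurrence for multinomial coefficients in the summed form
`∑_{|β| = k+1} m(β) F(β) = ∑_{|α| = k} m(α) ∑ᵢ F(α + eᵢ)`. That recurrence is read off by comparing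
coefficients in `(∑ᵢ xᵢ)^(k+1) = (∑ᵢ xᵢ)^k · ∑ᵢ xᵢ` in the monoid algebra `ℕ[ℕ^ι]`.
-/

open Arrangement Finset

theorem MvPolynomial.pderiv_pderiv_comm {R σ : Type*} [CommSemiring R] (i j : σ)
    (p : MvPolynomial σ R) : pderiv i (pderiv j p) = pderiv j (pderiv i p) := by
  classical
  induction p using MvPolynomial.induction_on with
  | C a => simp
  | add p q hp hq => simp [hp, hq]
  | mul_X p k ih =>
    simp only [pderiv_mul, map_add, pderiv_X, ih, Pi.single_apply, apply_ite (pderiv _),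
      pderiv_one, map_zero, mul_zero, add_zero, ite_self]
    abel

theorem Finset.sum_piAntidiag_succ_multinomial_smul {ι M : Type*} [Fintype ι] [DecidableEq ι]
    [AddCommMonoid M] (F : (ι → ℕ) → M) (k : ℕ) :
    ∑ β ∈ univ.piAntidiag (k + 1), Nat.multinomial univ β • F β =
      ∑ α ∈ univ.piAntidiag k, Nat.multinomial univ α • ∑ i, F (α + Pi.single i 1) := by
  set x : ι → AddMonoidAlgebra ℕ (ι → ℕ) := fun i => AddMonoidAlgebra.single (Pi.single i 1) 1
    with hx
  have hpow : ∀ m, (∑ i, x i) ^ m =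
      ∑ α ∈ univ.piAntidiag m, Nat.multinomial univ α • AddMonoidAlgebra.single α 1 := by
    intro m
    rw [sum_pow_eq_sum_piAntidiag]
    refine sum_congr rfl fun α _ => ?_
    rw [nsmul_eq_mul]
    simp only [hx, AddMonoidAlgebra.single_pow, AddMonoidAlgebra.prod_single, one_pow,
      prod_const_one, ← Pi.single_smul, smul_eq_mul, mul_one, univ_sum_single]
  have h := congrArg (fun a => Finsupp.linearCombination ℕ F a.coeff) (pow_succ (∑ i, x i) k)
  rw [hpow, hpow, sum_mul] at h
  simpa only [hx, smul_sum, AddMonoidAlgebra.smul_single, smul_eq_mul, mul_one, mul_sum,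
    AddMonoidAlgebra.coeff_sum, AddMonoidAlgebra.coeff_single, map_sum,
    Finsupp.linearCombination_single, AddMonoidAlgebra.single_mul_single] using h

namespace SemiconjBy

variable {A : Type*} [Semiring A] {e s t : A} {a b : ℕ}

theorem mul_left_add_natCast (hs : SemiconjBy s e (e + a)) (ht : SemiconjBy t e (e + b)) :
    SemiconjBy (s * t) e (e + (a + b : ℕ)) := by
  have hs' : SemiconjBy s (e + b) (e + (a + b : ℕ)) := by
    rw [Nat.cast_add, ← add_assoc]
    exact hs.add_right (Nat.cast_commute b s).symm
  exact hs'.mul_left ht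

theorem pow_left_add_natCast (hs : SemiconjBy s e (e + a)) (m : ℕ) :
    SemiconjBy (s ^ m) e (e + (m * a : ℕ)) := by
  induction m with
  | zero => simp
  | succ m ih =>
    rw [pow_succ', Nat.succ_mul, add_comm _ a]
    exact hs.mul_left_add_natCast ih

theorem foldr_mul_left_add_natCast {ι : Type*} {g : ι → A} {w : ι → ℕ} {l : List ι}
    (h : ∀ i ∈ l, SemiconjBy (g i) e (e + w i)) :
    SemiconjBy (l.foldr (fun i f => g i * f) 1) e (e + (l.map w).sum) := by
  induction l with
  | nil => simp
  | cons i l ih =>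
    rw [List.forall_mem_cons] at h
    simpa using h.1.mul_left_add_natCast (ih h.2)

end SemiconjBy

namespace Arrangement

variable {n : ℕ}

local notation "R" => MvPolynomial (Fin n) ℂ

local notation "∂[" i "]" => Derivation.toLinearMap (pderiv i : Derivation ℂ R R)

theorem pderiv_eulerOp (i : Fin n) (q : R) :
    pderiv i (eulerOp q) = eulerOp (pderiv i q) + pderiv i q := by
  simp only [eulerOp, map_sum, pderiv_mul, pderiv_X, Pi.single_apply, ite_mul, one_mul, zero_mul,
    sum_add_distrib, sum_ite_eq', mem_univ, if_true, pderiv_pderiv_comm i]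
  ring

noncomputable def eulerEnd : Module.End ℂ R :=
  ∑ i, LinearMap.mulLeft ℂ (X i : R) * ∂[i]

theorem eulerEnd_apply (q : R) : eulerEnd q = eulerOp q := by
  simp [eulerEnd, eulerOp, LinearMap.sum_apply]

theorem semiconjBy_pderiv_eulerEnd (i : Fin n) :
    SemiconjBy ∂[i] eulerEnd (eulerEnd + ((1 : ℕ) : Module.End ℂ R)) :=
  LinearMap.ext fun q => by simp [eulerEnd_apply, pderiv_eulerOp]

theorem semiconjBy_pdIter_eulerEnd (α : Fin n → ℕ) :
    SemiconjBy (pdIter α) eulerEnd (eulerEnd + ((∑ i, α i : ℕ) : Module.End ℂ R)) := by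
  rw [Fin.sum_univ_def]
  exact SemiconjBy.foldr_mul_left_add_natCast fun i _ => by
    simpa using (semiconjBy_pderiv_eulerEnd i).pow_left_add_natCast (α i)

theorem pdIter_eulerOp (α : Fin n → ℕ) (q : R) :
    pdIter α (eulerOp q) = eulerOp (pdIter α q) + (∑ i, α i) • pdIter α q := by
  simpa only [Module.End.mul_apply, LinearMap.add_apply, Module.End.natCast_apply,
    eulerEnd_apply] using congrArg (· q) (semiconjBy_pdIter_eulerEnd α).eq

theorem commute_pderiv (i j : Fin n) : Commute ∂[i] ∂[j] :=
  LinearMap.ext fun q => pderiv_pderiv_comm i j q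

theorem foldr_pderiv_pow_add_single (α : Fin n → ℕ) (i : Fin n) (l : List (Fin n)) :
    l.foldr (fun j f => ∂[j] ^ (α + Pi.single i 1 : Fin n → ℕ) j * f) 1 =
      ∂[i] ^ l.count i * l.foldr (fun j f => ∂[j] ^ α j * f) 1 := by
  induction l with
  | nil => simp
  | cons j l ih =>
    rw [List.foldr_cons, List.foldr_cons, ih, List.count_cons, Pi.add_apply]
    rcases eq_or_ne j i with rfl | hji
    · rw [Pi.single_eq_same, beq_self_eq_true, if_pos rfl, ← mul_assoc, ← mul_assoc, ← pow_add,
        ← pow_add]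
      congr 2
      omega
    · rw [Pi.single_eq_of_ne hji, beq_false_of_ne hji, if_neg Bool.false_ne_true, add_zero,
        add_zero]
      exact ((commute_pderiv j i).pow_pow _ _).left_comm _

theorem pdIter_add_single (α : Fin n → ℕ) (i : Fin n) :
    pdIter (α + Pi.single i 1) = ∂[i] * pdIter α := by
  rw [pdIter, foldr_pderiv_pow_add_single,
    List.count_eq_one_of_mem (List.nodup_finRange n) (List.mem_finRange i), pow_one, pdIter]

theorem pdIter_zero : pdIter (0 : Fin n → ℕ) = 1 := by
  simp [pdIter]

theorem prod_X_pow_mul_pdIter_eulerOp_sub {α : Fin n → ℕ} {k : ℕ} (hα : ∑ i, α i = k) (q : R) :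
    (∏ i, X i ^ α i) * pdIter α (eulerOp q - (k : R) * q) =
      ∑ i, (∏ j, X j ^ (α + Pi.single i 1 : Fin n → ℕ) j) * pdIter (α + Pi.single i 1) q := by
  have hE : pdIter α (eulerOp q - (k : R) * q) = eulerOp (pdIter α q) := by
    rw [map_sub, ← nsmul_eq_mul, map_nsmul, pdIter_eulerOp, hα, add_sub_cancel_right]
  rw [hE]
  simp only [eulerOp, mul_sum, Module.End.mul_apply, pdIter_add_single, Pi.add_apply, pow_add,
    prod_mul_distrib, Pi.single_apply, pow_ite, pow_one, pow_zero, prod_ite_eq', mem_univ,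
    if_true, mul_assoc, Derivation.coeFn_coe]

end Arrangement

open Arrangement in
theorem eulerDownProd_eq_sum_multinomial_general
    (n : ℕ) (k : ℕ) (q : MvPolynomial (Fin n) ℂ) :
    eulerDownProd k q =
      ∑ α ∈ Finset.Nat.antidiagonalTuple n k,
        (Nat.multinomial Finset.univ α : MvPolynomial (Fin n) ℂ) *
          ((∏ i, X i ^ α i) * pdIter α q) := by
  induction k generalizing q with
  | zero => simp [eulerDownProd, pdIter_zero, Nat.antidiagonalTuple_zero_right, Nat.multinomial]
  | succ k ih =>
    rw [eulerDownProd, ih]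
    simp only [← piAntidiag_univ_fin_eq_antidiagonalTuple]
    rw [sum_congr rfl fun α hα =>
      congrArg (_ * ·) (prod_X_pow_mul_pdIter_eulerOp_sub (mem_piAntidiag.1 hα).1 q)]
    simp only [← nsmul_eq_mul, sum_piAntidiag_succ_multinomial_smul]

open Arrangement in
/-- For every `k ≥ 1` and every polynomial `q`,
`(E − 0)(E − 1)⋯(E − (k−1))(q) = ∑_{|α| = k} (k!/(α₁!⋯αₙ!)) · x^α · ∂^α q`. -/
theorem eulerDownProd_eq_sum_multinomial
    (n : ℕ) (hn : 1 ≤ n) (k : ℕ) (hk : 1 ≤ k) (q : MvPolynomial (Fin n) ℂ) :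
    eulerDownProd k q =
      ∑ α ∈ Finset.Nat.antidiagonalTuple n k,
        (Nat.multinomial Finset.univ α : MvPolynomial (Fin n) ℂ) *
          ((∏ i, X i ^ α i) * pdIter α q) :=
  eulerDownProd_eq_sum_multinomial_general n k q
end

section
/- Let a_1,…,a_n ∈ ℂ[x_1,…,x_n] and c_0, c_1,…,c_p ∈ ℂ[x_1,…,x_n], and consider the operator P = ∑_{i=1}^n (multiplication by a_i)∘D_i + (multiplication by c_0 + ∑_{j=1}^p c_j s_j) on M (this is the general form of an operator of order at most one for the ♯-filtration of D[s_1,…,s_p]). Then P(1) = 0 in M if and only if c_0 = 0 and, for every j ∈ {1,…,p}, ∑_{i=1}^n a_i·(∂f_j/∂x_i) = −c_j·f_j. In particular, P annihilates f_1^{s_1}⋯f_p^{s_p} exactly when the derivation χ = ∑_i a_i ∂/∂x_i is logarithmic for each f_j (χ(f_j) ∈ Ideal.span {f_j}) and P = χ̃, the operator obtained from χ by subtracting ∑_j b_j s_j where χ(f_j) = b_j f_j; consequently χ ↦ χ̃ is a bijection from logarithmic derivations to order-one ♯-operators annihilating f_1^{s_1}⋯f_p^{s_p}. -/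
open MvPolynomial

namespace Arrangement

variable {n : ℕ} {ι : Type} [Fintype ι]

/-- The module `D(A)` of logarithmic derivations of the arrangement defined by
the forms `l i`. -/
noncomputable def DA (l : ι → MvPolynomial (Fin n) ℂ) :
    Submodule (MvPolynomial (Fin n) ℂ)
      (Derivation ℂ (MvPolynomial (Fin n) ℂ) (MvPolynomial (Fin n) ℂ)) where
  carrier := {χ | ∀ i, χ (l i) ∈ Ideal.span {l i}}
  add_mem' := fun hx hy i => by
    simpa using add_mem (hx i) (hy i)
  zero_mem' := fun i => by simp
  smul_mem' := fun r χ hχ i => by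
    simpa using Ideal.mul_mem_left _ r (hχ i)

open Classical in
/-- The property characterizing the family of twisted derivatives
`D i = ∂/∂xᵢ + ∑ⱼ sⱼ (∂lⱼ/∂xᵢ)/lⱼ` acting on the localization
`M = ℂ[x,s,1/F]·l^s`. -/
def IsTwisted (l : ι → MvPolynomial (Fin n) ℂ)
    (D : Fin n → Module.End ℂ
      (Localization.Away (rename Sum.inl (∏ i, l i) : MvPolynomial (Fin n ⊕ ι) ℂ))) : Prop :=
  (∀ (i : Fin n) (r : MvPolynomial (Fin n ⊕ ι) ℂ)
      (m : Localization.Away (rename Sum.inl (∏ i, l i) : MvPolynomial (Fin n ⊕ ι) ℂ)),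
      D i (algebraMap _ _ r * m)
        = algebraMap _ _ (pderiv (Sum.inl i) r) * m + algebraMap _ _ r * D i m) ∧
  (∀ i : Fin n,
      algebraMap (MvPolynomial (Fin n ⊕ ι) ℂ) _ (rename Sum.inl (∏ j, l j)) * D i 1
        = algebraMap _ _ (∑ j, X (Sum.inr j) *
            rename Sum.inl (pderiv i (l j) * ∏ k ∈ Finset.univ.erase j, l k)))

/-- The algebra `W` of operators on `M`, image of the Weyl algebra
`Aₙ(ℂ)[s₁,…,s_p]` acting on `ℂ[x,s,1/F]·l^s`. -/
noncomputable def Wa (l : ι → MvPolynomial (Fin n) ℂ)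
    (D : Fin n → Module.End ℂ
      (Localization.Away (rename Sum.inl (∏ i, l i) : MvPolynomial (Fin n ⊕ ι) ℂ))) :
    Subalgebra ℂ (Module.End ℂ
      (Localization.Away (rename Sum.inl (∏ i, l i) : MvPolynomial (Fin n ⊕ ι) ℂ))) :=
  Algebra.adjoin ℂ
    ((Set.range fun i : Fin n =>
        LinearMap.mulLeft ℂ (algebraMap _ _ (X (Sum.inl i) : MvPolynomial (Fin n ⊕ ι) ℂ))) ∪
     (Set.range fun j : ι =>
        LinearMap.mulLeft ℂ (algebraMap _ _ (X (Sum.inr j) : MvPolynomial (Fin n ⊕ ι) ℂ))) ∪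
     Set.range D)

/-- The Bernstein ideal `B(A)`, as the set of polynomials `b(s₁,…,s_p)` such that
`b · l^s = P · l^{s+1}` for some operator `P` in the Weyl algebra. -/
noncomputable def Bideal (l : ι → MvPolynomial (Fin n) ℂ)
    (D : Fin n → Module.End ℂ
      (Localization.Away (rename Sum.inl (∏ i, l i) : MvPolynomial (Fin n ⊕ ι) ℂ))) :
    Set (MvPolynomial ι ℂ) :=
  {b | ∃ P ∈ Wa l D,
    algebraMap (MvPolynomial (Fin n ⊕ ι) ℂ) _ ((rename Sum.inr b : MvPolynomial (Fin n ⊕ ι) ℂ))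
      = P (algebraMap _ _ (rename Sum.inl (∏ i, l i) : MvPolynomial (Fin n ⊕ ι) ℂ))}

/-- The linear functional on `ℂⁿ` associated to a linear form. -/
noncomputable def toLin (f : MvPolynomial (Fin n) ℂ) : (Fin n → ℂ) →ₗ[ℂ] ℂ :=
  ∑ i, f.coeff (Finsupp.single i 1) • LinearMap.proj i

/-- The hyperplane `ker lᵢ ⊆ ℂⁿ`. -/
noncomputable def hyp (l : ι → MvPolynomial (Fin n) ℂ) (i : ι) : Submodule ℂ (Fin n → ℂ) :=
  LinearMap.ker (toLin (l i))

open Classical in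
/-- The intersection lattice `L(A)`: all intersections of nonempty subfamilies. -/
noncomputable def LA (l : ι → MvPolynomial (Fin n) ℂ) : Finset (Submodule ℂ (Fin n → ℂ)) :=
  (Finset.univ.powerset.filter Finset.Nonempty).image fun I : Finset ι => ⨅ i ∈ I, hyp l i

open Classical in
/-- `J(X) = {i : X ⊆ ker lᵢ}`. -/
noncomputable def JX (l : ι → MvPolynomial (Fin n) ℂ) (Y : Submodule ℂ (Fin n → ℂ)) :
    Finset ι :=
  Finset.univ.filter fun i => Y ≤ hyp l i

/-- `r(X) = n - dim X`, the codimension. -/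
noncomputable def rX (Y : Submodule ℂ (Fin n → ℂ)) : ℕ :=
  n - Module.finrank ℂ Y

/-- Irreducibility of the subarrangement with hyperplanes indexed by `J`. -/
def IrredOn (l : ι → MvPolynomial (Fin n) ℂ) (J : Finset ι) : Prop :=
  ¬ ∃ V₁ V₂ : Submodule ℂ (Fin n → ℂ), IsCompl V₁ V₂ ∧
      (∀ i ∈ J, V₁ ≤ hyp l i ∨ V₂ ≤ hyp l i) ∧
      (∃ i ∈ J, V₁ ≤ hyp l i) ∧ (∃ i ∈ J, V₂ ≤ hyp l i)

open Classical in
/-- `L'(A) = {X ∈ L(A) : A_X irreducible}`. -/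
noncomputable def Lprime (l : ι → MvPolynomial (Fin n) ℂ) :
    Finset (Submodule ℂ (Fin n → ℂ)) :=
  (LA l).filter fun Y => IrredOn l (JX l Y)

/-- The polynomial
`b_A = ∏_{X ∈ L'(A)} ∏_{j=0}^{2(card J(X) − r(X))} ((∑_{i ∈ J(X)} sᵢ) + r(X) + j)`. -/
noncomputable def bGen (l : ι → MvPolynomial (Fin n) ℂ) : MvPolynomial ι ℂ :=
  ∏ Y ∈ Lprime l, ∏ j ∈ Finset.range (2 * ((JX l Y).card - rX (n := n) Y) + 1),
    ((∑ i ∈ JX l Y, X i) + C ((rX (n := n) Y : ℂ) + (j : ℂ)))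

end Arrangement

/-!
Clearing the denominator `F = ∏ fⱼ`, the twisting rule `F · Dᵢ(1) = ∑ⱼ sⱼ (∂ᵢfⱼ) ∏_{k ≠ j} fₖ`
turns `F · P(1)` into the image of the polynomial
`c₀ F + ∑ⱼ sⱼ (∑ᵢ aᵢ ∂ᵢfⱼ + cⱼ fⱼ) ∏_{k ≠ j} fₖ`, which is affine in `s`. Since `F` is a unit
of `M` and `ℂ[x, s] → M` is injective, `P(1) = 0` amounts to the vanishing of the constant
term and of every `sⱼ`-coefficient, and the cofactors `∏_{k ≠ j} fₖ` can be cancelled.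
-/

theorem Localization.Away.eq_zero_iff_of_algebraMap_mul_eq {R : Type*} [CommRing R] [IsDomain R]
    {r : R} (hr : r ≠ 0) {m : Localization.Away r} {g : R}
    (h : algebraMap R _ r * m = algebraMap R _ g) : m = 0 ↔ g = 0 := by
  rw [← (IsLocalization.Away.algebraMap_isUnit r).mul_right_eq_zero, h,
    map_eq_zero_iff _ (IsLocalization.injective _ (powers_le_nonZeroDivisors_of_noZeroDivisors hr))]

namespace Arrangement

open Finset

theorem rename_inl_add_sum_X_inr_mul_eq_zero_iff {R σ ι : Type*} [CommSemiring R] [Fintype ι]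
    (g₀ : MvPolynomial σ R) (g : ι → MvPolynomial σ R) :
    rename Sum.inl g₀ + ∑ j, X (Sum.inr j) * rename Sum.inl (g j)
        = (0 : MvPolynomial (σ ⊕ ι) R) ↔ g₀ = 0 ∧ ∀ j, g j = 0 := by
  classical
  refine ⟨fun h => ?_, fun ⟨h₀, h⟩ => by simp [h₀, h]⟩
  have eval_at (t : ι → MvPolynomial σ R) : g₀ + ∑ j, t j * g j = 0 := by
    simpa only [map_add, map_sum, map_mul, aeval_rename, Function.comp_def, Sum.elim_inl,
      Sum.elim_inr, aeval_X, aeval_X_left_apply, map_zero] using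
      congrArg (aeval (Sum.elim X t)) h
  have h₀ : g₀ = 0 := by simpa using eval_at 0
  refine ⟨h₀, fun j => ?_⟩
  simpa [h₀, Pi.single_apply] using eval_at (Pi.single j 1)

theorem sum_mul_sum_X_inr_add_prod_mul_eq {R σ ι : Type*} [CommSemiring R] [Fintype σ]
    [Fintype ι] [DecidableEq ι] (l : ι → MvPolynomial σ R) (a : σ → MvPolynomial σ R)
    (c₀ : MvPolynomial σ R) (c : ι → MvPolynomial σ R) :
    (∑ i, rename Sum.inl (a i) *
        ∑ j, X (Sum.inr j) * rename Sum.inl (pderiv i (l j) * ∏ k ∈ univ.erase j, l k))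
      + rename Sum.inl (∏ j, l j) * (rename Sum.inl c₀ + ∑ j, X (Sum.inr j) * rename Sum.inl (c j))
    = (rename Sum.inl (c₀ * ∏ j, l j) + ∑ j, X (Sum.inr j) *
        rename Sum.inl ((∑ i, a i * pderiv i (l j) + c j * l j) * ∏ k ∈ univ.erase j, l k) :
          MvPolynomial (σ ⊕ ι) R) := by
  have coeff_eq (j : ι) :
      (∑ i, rename Sum.inl (a i) *
          (X (Sum.inr j) * rename Sum.inl (pderiv i (l j) * ∏ k ∈ univ.erase j, l k)))
        + rename Sum.inl (∏ k, l k) * (X (Sum.inr j) * rename Sum.inl (c j))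
      = X (Sum.inr j) * rename Sum.inl
          ((∑ i, a i * pderiv i (l j) + c j * l j) * ∏ k ∈ univ.erase j, l k) := by
    rw [← mul_prod_erase _ _ (mem_univ j)]
    simp only [map_mul, map_add, map_sum, sum_mul, mul_sum, add_mul, mul_add]
    congr 1
    · exact sum_congr rfl fun i _ => by ring
    · ring
  rw [map_mul, sum_congr rfl fun j _ => (coeff_eq j).symm, sum_add_distrib, sum_comm]
  simp only [mul_sum, mul_add]
  ring

section Twisted

variable {n : ℕ} {ι : Type} [Fintype ι] {l : ι → MvPolynomial (Fin n) ℂ}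
  {D : Fin n → Module.End ℂ
    (Localization.Away (rename Sum.inl (∏ i, l i) : MvPolynomial (Fin n ⊕ ι) ℂ))}

theorem IsTwisted.prod_mul_apply_one [DecidableEq ι] (hD : IsTwisted l D) (i : Fin n) :
    algebraMap (MvPolynomial (Fin n ⊕ ι) ℂ) _ (rename Sum.inl (∏ j, l j)) * D i 1
      = algebraMap _ _ (∑ j, X (Sum.inr j) *
          rename Sum.inl (pderiv i (l j) * ∏ k ∈ univ.erase j, l k)) := by
  -- `IsTwisted` fixes the classical `DecidableEq ι` instance for `univ.erase`.
  convert hD.2 i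

theorem IsTwisted.prod_mul_orderOne_apply_one [DecidableEq ι] (hD : IsTwisted l D)
    (a : Fin n → MvPolynomial (Fin n) ℂ) (c₀ : MvPolynomial (Fin n) ℂ)
    (c : ι → MvPolynomial (Fin n) ℂ) :
    algebraMap (MvPolynomial (Fin n ⊕ ι) ℂ) _ (rename Sum.inl (∏ j, l j)) *
      ((∑ i, LinearMap.mulLeft ℂ (algebraMap (MvPolynomial (Fin n ⊕ ι) ℂ) _
            (rename Sum.inl (a i))) * D i)
        + LinearMap.mulLeft ℂ (algebraMap (MvPolynomial (Fin n ⊕ ι) ℂ) _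
            (rename Sum.inl c₀ + ∑ j, X (Sum.inr j) * rename Sum.inl (c j)))) 1
      = algebraMap _ _ (rename Sum.inl (c₀ * ∏ j, l j) + ∑ j, X (Sum.inr j) *
          rename Sum.inl ((∑ i, a i * pderiv i (l j) + c j * l j) * ∏ k ∈ univ.erase j, l k)) := by
  simp only [LinearMap.add_apply, LinearMap.sum_apply, Module.End.mul_apply,
    LinearMap.mulLeft_apply, mul_one]
  rw [← sum_mul_sum_X_inr_add_prod_mul_eq, mul_add, mul_sum,
    sum_congr rfl fun i _ => by rw [mul_left_comm, hD.prod_mul_apply_one, ← map_mul],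
    ← map_sum, ← map_mul, ← map_add]

end Twisted

end Arrangement

open Arrangement in
theorem order_one_operator_annihilates_iff_general
    (n p : ℕ) (f : Fin p → MvPolynomial (Fin n) ℂ)
    (hf : ∀ j, f j ≠ 0)
    (D : Fin n → Module.End ℂ
      (Localization.Away (rename Sum.inl (∏ i, f i) : MvPolynomial (Fin n ⊕ Fin p) ℂ)))
    (hD : IsTwisted f D)
    (a : Fin n → MvPolynomial (Fin n) ℂ)
    (c0 : MvPolynomial (Fin n) ℂ) (c : Fin p → MvPolynomial (Fin n) ℂ) :
    ((∑ i, LinearMap.mulLeft ℂ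
        (algebraMap (MvPolynomial (Fin n ⊕ Fin p) ℂ) _
          (rename Sum.inl (a i) : MvPolynomial (Fin n ⊕ Fin p) ℂ)) * D i)
      + LinearMap.mulLeft ℂ
        (algebraMap (MvPolynomial (Fin n ⊕ Fin p) ℂ) _
          ((rename Sum.inl c0 : MvPolynomial (Fin n ⊕ Fin p) ℂ)
            + ∑ j, X (Sum.inr j) * rename Sum.inl (c j))))
      (1 : Localization.Away (rename Sum.inl (∏ i, f i) : MvPolynomial (Fin n ⊕ Fin p) ℂ))
      = 0
    ↔ (c0 = 0 ∧ ∀ j, ∑ i, a i * pderiv i (f j) = - c j * f j) := by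
  classical
  have hF : ∏ j, f j ≠ 0 := Finset.prod_ne_zero_iff.mpr fun j _ => hf j
  rw [Localization.Away.eq_zero_iff_of_algebraMap_mul_eq
      ((map_ne_zero_iff _ (rename_injective _ Sum.inl_injective)).mpr hF)
      (hD.prod_mul_orderOne_apply_one a c0 c),
    rename_inl_add_sum_X_inr_mul_eq_zero_iff, mul_eq_zero, or_iff_left hF]
  refine and_congr_right fun _ => forall_congr' fun j => ?_
  rw [mul_eq_zero, or_iff_left (Finset.prod_ne_zero_iff.mpr fun k _ => hf k),
    add_eq_zero_iff_eq_neg, neg_mul]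

open Arrangement in
/-- An operator `P = ∑ᵢ aᵢ Dᵢ + (c₀ + ∑ⱼ cⱼ sⱼ)` of ♯-order at most one
kills `f₁^{s₁}⋯f_p^{s_p}` (i.e. `P(1) = 0` in `M`) iff `c₀ = 0` and
`∑ᵢ aᵢ ∂fⱼ/∂xᵢ = −cⱼ fⱼ` for all `j`; i.e. exactly when `∑ᵢ aᵢ ∂/∂xᵢ` is a logarithmic
derivation for each `fⱼ` and `P` is the associated twisted operator. -/
theorem order_one_operator_annihilates_iff
    (n p : ℕ) (hp : 1 ≤ p) (f : Fin p → MvPolynomial (Fin n) ℂ)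
    (hf : ∀ j, f j ≠ 0)
    (D : Fin n → Module.End ℂ
      (Localization.Away (rename Sum.inl (∏ i, f i) : MvPolynomial (Fin n ⊕ Fin p) ℂ)))
    (hD : IsTwisted f D)
    (a : Fin n → MvPolynomial (Fin n) ℂ)
    (c0 : MvPolynomial (Fin n) ℂ) (c : Fin p → MvPolynomial (Fin n) ℂ) :
    ((∑ i, LinearMap.mulLeft ℂ
        (algebraMap (MvPolynomial (Fin n ⊕ Fin p) ℂ) _
          (rename Sum.inl (a i) : MvPolynomial (Fin n ⊕ Fin p) ℂ)) * D i)
      + LinearMap.mulLeft ℂ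
        (algebraMap (MvPolynomial (Fin n ⊕ Fin p) ℂ) _
          ((rename Sum.inl c0 : MvPolynomial (Fin n ⊕ Fin p) ℂ)
            + ∑ j, X (Sum.inr j) * rename Sum.inl (c j))))
      (1 : Localization.Away (rename Sum.inl (∏ i, f i) : MvPolynomial (Fin n ⊕ Fin p) ℂ))
      = 0
    ↔ (c0 = 0 ∧ ∀ j, ∑ i, a i * pderiv i (f j) = - c j * f j) :=
  order_one_operator_annihilates_iff_general n p f hf D hD a c0 c
end
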